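/- arXiv:2307.14954 — 2 statements merged into one kernel-verified Lean document; each statement's English description precedes it below -/
import Mathlib

section
/- If the log-likelihood ratio ℓ(x) = log(p₁(x)/p₀(x)) between two probability densities p₀, p₁ is Gaussian distributed under hypothesis h₁ with mean μ and variance σ², then it is also Gaussian under h₀, and necessarily σ² = 2μ, E₁[ℓ] = μ, E₀[ℓ] = -μ; i.e. the density of ℓ under h₁ is (4πμ)^{-1/2} exp(-(ℓ-μ)²/(4μ)) and under h₀ it is the reflection ℓ ↦ -ℓ of this density. -/
open Real MeasureTheory

lemma odd_integral_zero (f : ℝ → ℝ) (hodd : ∀ x, f (-x) = - f x) :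
    ∫ x, f x = 0 := by
  have h := MeasureTheory.integral_neg_eq_self f (volume : Measure ℝ)
  simp_rw [hodd, integral_neg] at h
  linarith

lemma gauss_mean (m : ℝ) (v : NNReal) (hv : v ≠ 0) :
    ∫ y, y * ProbabilityTheory.gaussianPDFReal m v y = m := by
  have hv' : (0:ℝ) < (v:ℝ) := by positivity
  set g := ProbabilityTheory.gaussianPDFReal m v with hg
  have hb : (0:ℝ) < (2 * (v:ℝ))⁻¹ := by positivity
  have hI : Integrable (fun y : ℝ => (y - m) * g y) := by
    have h := (integrable_rpow_mul_exp_neg_mul_sq hb (by norm_num : (-1:ℝ) < 1)).const_mul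
      ((Real.sqrt (2 * π * (v:ℝ)))⁻¹)
    simp_rw [rpow_one] at h
    have h2 := h.comp_sub_right m
    refine h2.congr (Filter.Eventually.of_forall fun y => ?_)
    simp only [hg, ProbabilityTheory.gaussianPDFReal]
    rw [show -(y - m) ^ 2 / (2 * (v:ℝ)) = -(2 * (v:ℝ))⁻¹ * (y - m) ^ 2 by
      field_simp]
    ring
  have hodd : ∫ y, (y - m) * g y = 0 := by
    rw [← MeasureTheory.integral_add_right_eq_self (fun y => (y - m) * g y) m]
    apply odd_integral_zero
    intro x
    simp only [hg, ProbabilityTheory.gaussianPDFReal]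
    rw [show (-x + m - m) ^ 2 = (x + m - m) ^ 2 by ring]
    ring
  have hsplit : ∀ y : ℝ, y * g y = (y - m) * g y + m * g y := fun y => by ring
  simp_rw [hsplit]
  rw [MeasureTheory.integral_add hI
    ((ProbabilityTheory.integrable_gaussianPDFReal m v).const_mul m), hodd,
    MeasureTheory.integral_const_mul,
    ProbabilityTheory.integral_gaussianPDFReal_eq_one m hv]
  ring

/-- If the LLR is Gaussian N(μ, σ²) under h₁ and the densities are related by
f₀(y) = e^{-y} f₁(y), then σ² = 2μ, the density under h₁ is the stated one,
the density under h₀ is its reflection, and the means are ±μ. -/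
theorem stmt_0 (μ σ : ℝ) (hμ : 0 < μ) (hσ : 0 < σ) (f₀ f₁ : ℝ → ℝ)
    (hf₁ : ∀ y, f₁ y = (Real.sqrt (2 * π * σ ^ 2))⁻¹ * Real.exp (-(y - μ) ^ 2 / (2 * σ ^ 2)))
    (hrel : ∀ y, f₀ y = Real.exp (-y) * f₁ y)
    (hnorm : ∫ y, f₀ y = 1) :
    σ ^ 2 = 2 * μ ∧
    (∀ y, f₁ y = (Real.sqrt (4 * π * μ))⁻¹ * Real.exp (-(y - μ) ^ 2 / (4 * μ))) ∧
    (∀ y, f₀ y = f₁ (-y)) ∧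
    (∫ y, y * f₁ y) = μ ∧
    (∫ y, y * f₀ y) = -μ := by
  have hs2 : (σ:ℝ) ^ 2 ≠ 0 := by positivity
  set v : NNReal := ⟨σ ^ 2, sq_nonneg σ⟩ with hv
  have hvcoe : (v : ℝ) = σ ^ 2 := rfl
  have hvne : v ≠ 0 := by
    intro h
    apply hs2
    rw [← hvcoe, h, NNReal.coe_zero]
  -- f₁ is the gaussian pdf with mean μ and variance σ²
  have hf₁' : ∀ y, f₁ y = ProbabilityTheory.gaussianPDFReal μ v y := by
    intro y
    rw [hf₁]
    simp only [ProbabilityTheory.gaussianPDFReal, hvcoe]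
  -- key rewriting of f₀ as a scaled gaussian
  have key : ∀ y, f₀ y = Real.exp (σ ^ 2 / 2 - μ) *
      ProbabilityTheory.gaussianPDFReal (μ - σ ^ 2) v y := by
    intro y
    rw [hrel, hf₁]
    simp only [ProbabilityTheory.gaussianPDFReal, hvcoe]
    have hexp : Real.exp (-y) * Real.exp (-(y - μ) ^ 2 / (2 * σ ^ 2)) =
        Real.exp (σ ^ 2 / 2 - μ) * Real.exp (-(y - (μ - σ ^ 2)) ^ 2 / (2 * σ ^ 2)) := by
      rw [← Real.exp_add, ← Real.exp_add]
      congr 1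
      field_simp
      ring
    linear_combination (Real.sqrt (2 * π * σ ^ 2))⁻¹ * hexp
  -- normalization forces σ² = 2μ
  have hint : ∫ y, f₀ y = Real.exp (σ ^ 2 / 2 - μ) := by
    simp_rw [key]
    rw [MeasureTheory.integral_const_mul,
      ProbabilityTheory.integral_gaussianPDFReal_eq_one _ hvne, mul_one]
  have hσ2 : σ ^ 2 = 2 * μ := by
    rw [hint] at hnorm
    have : σ ^ 2 / 2 - μ = 0 := Real.exp_injective (by rw [hnorm, Real.exp_zero])
    linarith
  have hf₁2 : ∀ y, f₁ y = (Real.sqrt (4 * π * μ))⁻¹ *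
      Real.exp (-(y - μ) ^ 2 / (4 * μ)) := by
    intro y
    rw [hf₁, hσ2]
    rw [show 2 * π * (2 * μ) = 4 * π * μ by ring, show 2 * (2 * μ) = 4 * μ by ring]
  have hrefl : ∀ y, f₀ y = f₁ (-y) := by
    intro y
    rw [hrel, hf₁2, hf₁2]
    have hexp : Real.exp (-y) * Real.exp (-(y - μ) ^ 2 / (4 * μ)) =
        Real.exp (-(-y - μ) ^ 2 / (4 * μ)) := by
      rw [← Real.exp_add]
      congr 1
      field_simp
      ring
    linear_combination (Real.sqrt (4 * π * μ))⁻¹ * hexp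
  have hmean1 : (∫ y, y * f₁ y) = μ := by
    simp_rw [hf₁']
    exact gauss_mean μ v hvne
  refine ⟨hσ2, hf₁2, hrefl, hmean1, ?_⟩
  have h := MeasureTheory.integral_neg_eq_self (fun y => y * f₁ (-y)) (volume : Measure ℝ)
  simp only [neg_neg, neg_mul] at h
  simp_rw [hrefl]
  rw [← h, MeasureTheory.integral_neg, hmean1]
end

section
/- (Wald's error bounds for the SPRT.) Let ℓ_t be the log-likelihood ratio process and τ the first time ℓ_t exits the interval (-a₀, a₁) with a₀, a₁ > 0, deciding h₁ if ℓ_τ ≥ a₁ and h₀ if ℓ_τ ≤ -a₀. Then the error probabilities satisfy α₁ := P₀(ℓ_τ ≥ a₁) ≤ (1-α₀) e^{-a₁} and α₀ := P₁(ℓ_τ ≤ -a₀) ≤ (1-α₁) e^{-a₀}. -/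
/-!
Under `P₁` the stopped log-likelihood ratio is at least `a₁` on the region where `h₁` is
accepted, so the change of measure `dP₀ = e^{-ℓ_τ} dP₁` bounds `α₁ = P₀(ℓ_τ ≥ a₁)` by
`e^{-a₁} P₁(ℓ_τ ≥ a₁)`; since the two decision regions are disjoint, `P₁(ℓ_τ ≥ a₁) ≤ 1 - α₀`.
The bound on `α₀` is symmetric, with `dP₁ = e^{ℓ_τ} dP₀`.
-/

open MeasureTheory Real

namespace MeasureTheory

variable {Ω : Type*} [MeasurableSpace Ω]

lemma measureReal_le_mul_of_eq_setIntegral {μ ν : Measure Ω} [IsFiniteMeasure ν]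
    {f : Ω → ℝ} {s : Set Ω} {c : ℝ} (hμ : μ.real s = ∫ ω in s, f ω ∂ν)
    (hf : ∀ ω ∈ s, ‖f ω‖ ≤ c) :
    μ.real s ≤ c * ν.real s :=
  hμ ▸ (le_abs_self _).trans (norm_setIntegral_le_of_norm_le_const (measure_lt_top ν s) hf)

lemma measureReal_le_one_sub_of_disjoint {μ : Measure Ω} [IsZeroOrProbabilityMeasure μ]
    {s t : Set Ω} (hd : Disjoint s t) (hs : MeasurableSet s) :
    μ.real t ≤ 1 - μ.real s := by
  have h := measureReal_union' (μ := μ) hd hs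
  linarith [measureReal_le_one (μ := μ) (s := s ∪ t)]

lemma measureReal_le_one_sub_mul_of_eq_setIntegral {μ ν : Measure Ω}
    [IsProbabilityMeasure ν] {f : Ω → ℝ} {s t : Set Ω} {c : ℝ}
    (hμ : μ.real s = ∫ ω in s, f ω ∂ν) (hf : ∀ ω ∈ s, ‖f ω‖ ≤ c) (hc : 0 ≤ c)
    (hd : Disjoint t s) (ht : MeasurableSet t) :
    μ.real s ≤ (1 - ν.real t) * c :=
  calc μ.real s ≤ c * ν.real s := measureReal_le_mul_of_eq_setIntegral hμ hf
    _ ≤ c * (1 - ν.real t) := by gcongr; exact measureReal_le_one_sub_of_disjoint hd ht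
    _ = (1 - ν.real t) * c := mul_comm _ _

end MeasureTheory

theorem stmt_3_general {Ω : Type*} [MeasurableSpace Ω]
    (P₀ P₁ : Measure Ω) [IsProbabilityMeasure P₀] [IsProbabilityMeasure P₁]
    (L : Ω → ℝ) (hL : Measurable L) (a₀ a₁ : ℝ) (ha₀ : 0 < a₀) (ha₁ : 0 < a₁)
    (hcm0 : ∀ s : Set Ω, MeasurableSet s →
      (P₀ s).toReal = ∫ ω in s, Real.exp (-(L ω)) ∂P₁)
    (hcm1 : ∀ s : Set Ω, MeasurableSet s →
      (P₁ s).toReal = ∫ ω in s, Real.exp (L ω) ∂P₀) :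
    (P₀ {ω | a₁ ≤ L ω}).toReal ≤ (1 - (P₁ {ω | L ω ≤ -a₀}).toReal) * Real.exp (-a₁) ∧
    (P₁ {ω | L ω ≤ -a₀}).toReal ≤ (1 - (P₀ {ω | a₁ ≤ L ω}).toReal) * Real.exp (-a₀) := by
  have hs₀ : MeasurableSet {ω | L ω ≤ -a₀} := measurableSet_le hL measurable_const
  have hs₁ : MeasurableSet {ω | a₁ ≤ L ω} := measurableSet_le measurable_const hL
  have hd : Disjoint {ω | L ω ≤ -a₀} {ω | a₁ ≤ L ω} :=
    Set.disjoint_left.mpr fun ω (h₀ : L ω ≤ -a₀) (h₁ : a₁ ≤ L ω) => by linarith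
  constructor
  · refine measureReal_le_one_sub_mul_of_eq_setIntegral (hcm0 _ hs₁) (fun ω hω => ?_)
      (exp_pos _).le hd hs₀
    rw [norm_of_nonneg (exp_pos _).le, exp_le_exp]
    exact neg_le_neg hω
  · refine measureReal_le_one_sub_mul_of_eq_setIntegral (hcm1 _ hs₀) (fun ω hω => ?_)
      (exp_pos _).le hd.symm hs₁
    rw [norm_of_nonneg (exp_pos _).le, exp_le_exp]
    exact hω

/-- Wald's error bounds for the SPRT: with L = ℓ_τ the stopped LLR exiting
(-a₀, a₁), the errors satisfy α₁ ≤ (1-α₀)e^{-a₁} and α₀ ≤ (1-α₁)e^{-a₀}. -/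
theorem stmt_3 {Ω : Type*} [MeasurableSpace Ω]
    (P₀ P₁ : Measure Ω) [IsProbabilityMeasure P₀] [IsProbabilityMeasure P₁]
    (L : Ω → ℝ) (hL : Measurable L) (a₀ a₁ : ℝ) (ha₀ : 0 < a₀) (ha₁ : 0 < a₁)
    (hexit1 : ∀ᵐ ω ∂P₁, L ω ≤ -a₀ ∨ a₁ ≤ L ω)
    (hexit0 : ∀ᵐ ω ∂P₀, L ω ≤ -a₀ ∨ a₁ ≤ L ω)
    (hcm0 : ∀ s : Set Ω, MeasurableSet s →
      (P₀ s).toReal = ∫ ω in s, Real.exp (-(L ω)) ∂P₁)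
    (hcm1 : ∀ s : Set Ω, MeasurableSet s →
      (P₁ s).toReal = ∫ ω in s, Real.exp (L ω) ∂P₀) :
    (P₀ {ω | a₁ ≤ L ω}).toReal ≤ (1 - (P₁ {ω | L ω ≤ -a₀}).toReal) * Real.exp (-a₁) ∧
    (P₁ {ω | L ω ≤ -a₀}).toReal ≤ (1 - (P₀ {ω | a₁ ≤ L ω}).toReal) * Real.exp (-a₀) :=
  stmt_3_general P₀ P₁ L hL a₀ a₁ ha₀ ha₁ hcm0 hcm1
end
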